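/- Let a, b, x ∈ H_n with x^{-1} a x = b and t_i(x) ≡ 0 (mod |t_i(a)|) for all i ∈ I(a) = {i : t_i(a) ≠ 0}. Let i_1,…,i_k be a set of representatives of the equivalence classes under ∼_a of the elements of I(a). Then there exists x' ∈ H_n such that x'^{-1} a x' = b, t_i(x') ≡ 0 (mod |t_i(a)|) for all i ∈ I(a), and t_{i_1}(x') = ⋯ = t_{i_k}(x') = 0. -/

import Mathlib

namespace HoughtonPaper

/-- The set `X_n = {1,…,n} × ℕ` (rays indexed by `Fin n`). -/
abbrev X (n : ℕ) := Fin n × ℕ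

/-- `g` acts as the translation by `t i` on the ray `i` from the point `z` on. -/
def EvTransFrom {n : ℕ} (g : Equiv.Perm (X n)) (t : Fin n → ℤ) (z : ℕ) : Prop :=
  ∀ (i : Fin n) (m : ℕ), z ≤ m →
    (g (i, m)).1 = i ∧ ((g (i, m)).2 : ℤ) = (m : ℤ) + t i

/-- `g` is eventually a translation with translation vector `t`. -/
def EvTrans {n : ℕ} (g : Equiv.Perm (X n)) (t : Fin n → ℤ) : Prop :=
  ∃ z : ℕ, EvTransFrom g t z

/-- Membership in Houghton's group `H_n`. -/
def InH {n : ℕ} (g : Equiv.Perm (X n)) : Prop :=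
  ∃ t : Fin n → ℤ, EvTrans g t

/-- Support of a permutation. -/
def supp {α : Type*} (g : Equiv.Perm α) : Set α := {x | g x ≠ x}

/-- Membership in `FSym(X_n)`, the finitely supported permutations. -/
def InFSym {n : ℕ} (g : Equiv.Perm (X n)) : Prop := (supp g).Finite

/-- Two sets are almost equal if their symmetric difference is finite. -/
def AlmostEq {α : Type*} (A B : Set α) : Prop := (symmDiff A B).Finite

/-- The set `X_{i,r}(g) = {(i,m) : m ≡ r mod |t_i(g)|}`, for `t` the translation vector. -/
def Xir {n : ℕ} (i : Fin n) (t : Fin n → ℤ) (r : ℕ) : Set (X n) :=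
  {p : X n | p.1 = i ∧ p.2 % (t i).natAbs = r}

/-- Forward orbit `{(i,m)g^k : k ≥ 0}`. -/
def fwdOrbit {n : ℕ} (g : Equiv.Perm (X n)) (p : X n) : Set (X n) :=
  Set.range fun k : ℕ => (g ^ k) p

/-- The orbit `{x g^k : k ∈ ℤ}`. -/
def orbit {n : ℕ} (g : Equiv.Perm (X n)) (p : X n) : Set (X n) :=
  Set.range fun k : ℤ => (g ^ k) p

/-- `A` is an infinite orbit of `g`. -/
def IsInfOrbit {n : ℕ} (g : Equiv.Perm (X n)) (A : Set (X n)) : Prop :=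
  (∃ p : X n, A = orbit g p) ∧ A.Infinite

/-- The generating relation of `∼_g`: some infinite orbit of `g` is almost equal
to `X_{i,r}(g) ∪ X_{j,s}(g)`. -/
def BaseRel {n : ℕ} (g : Equiv.Perm (X n)) (t : Fin n → ℤ) (i j : Fin n) : Prop :=
  ∃ r s : ℕ, r < (t i).natAbs ∧ s < (t j).natAbs ∧
    ∃ A : Set (X n), IsInfOrbit g A ∧ AlmostEq A (Xir i t r ∪ Xir j t s)

/-- The equivalence relation `∼_g` on the rays, generated by `BaseRel`. -/
def SimRel {n : ℕ} (g : Equiv.Perm (X n)) (t : Fin n → ℤ) : Fin n → Fin n → Prop :=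
  Relation.EqvGen (BaseRel g t)

def genFun {n : ℕ} [NeZero n] (i : Fin n) : X n → X n :=
  fun p =>
    if p.1 = 0 then ((0 : Fin n), p.2 + 1)
    else if p.1 = i then (if p.2 = 0 then ((0 : Fin n), 0) else (i, p.2 - 1))
    else p

def genInvFun {n : ℕ} [NeZero n] (i : Fin n) : X n → X n :=
  fun p =>
    if p.1 = 0 then (if p.2 = 0 then (i, 0) else ((0 : Fin n), p.2 - 1))
    else if p.1 = i then (i, p.2 + 1)
    else p

/-- The generator `g_i` of Houghton's group (ray `1` of the paper is ray `0` here). -/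
def gen {n : ℕ} [NeZero n] (i : Fin n) (hi : i ≠ 0) : Equiv.Perm (X n) where
  toFun := genFun i
  invFun := genInvFun i
  left_inv := by
    rintro ⟨j, m⟩
    by_cases hj : j = 0
    · subst hj
      simp [genFun, genInvFun]
    · by_cases hji : j = i
      · subst hji
        rcases Nat.eq_zero_or_pos m with hm | hm
        · subst hm; simp [genFun, genInvFun, hi]
        · simp [genFun, genInvFun, hi, hm.ne', Nat.sub_add_cancel hm]
      · simp [genFun, genInvFun, hj, hji]
  right_inv := by
    rintro ⟨j, m⟩
    by_cases hj : j = 0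
    · subst hj
      rcases Nat.eq_zero_or_pos m with hm | hm
      · subst hm; simp [genFun, genInvFun, hi]
      · simp [genFun, genInvFun, hm.ne', hi.symm, Nat.sub_add_cancel hm]
    · by_cases hji : j = i
      · subst hji
        simp [genFun, genInvFun, hj]
      · simp [genFun, genInvFun, hj, hji]

/-- The transposition `τ` exchanging `(1,0)` and `(2,0)` (here `(0,0)` and `(1,0)`). -/
def tau (n : ℕ) [NeZero n] : Equiv.Perm (X n) :=
  Equiv.swap ((0 : Fin n), 0) ((1 : Fin n), 0)

/-- Letters of the alphabet `{g_2,…,g_n}^{±1}`. -/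
abbrev Letter (n : ℕ) [NeZero n] := {i : Fin n // i ≠ 0} × Bool

/-- Words over `{g_2,…,g_n}^{±1}`. -/
abbrev Word (n : ℕ) [NeZero n] := List (Letter n)

def evalLetter {n : ℕ} [NeZero n] (l : Letter n) : Equiv.Perm (X n) :=
  if l.2 then gen l.1.1 l.1.2 else (gen l.1.1 l.1.2)⁻¹

/-- The element of `Sym(X_n)` represented by a word. -/
def wordProd {n : ℕ} [NeZero n] (w : Word n) : Equiv.Perm (X n) :=
  (w.map evalLetter).prod

end HoughtonPaper

open HoughtonPaper

/-!
For each `∼_a`-class `C` of rays with nonzero translation, let `S_C` be the union of the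
`a`-orbits of the far-out points of the rays in `C`. An infinite orbit of `a` enters along one
ray and leaves along another, and those two rays are `∼_a`-related, so `S_C` contains no far-out
point of a ray outside `C`. Hence `a` restricted to `S_C` (and the identity elsewhere) lies in
`H_n`, commutes with `a`, and translates exactly the rays of `C`, each by `t_i(a)`. Multiplying
`x` on the left by a suitable product of powers of these elements kills `t_{i_l}(x)` for every
representative without changing `x⁻¹ a x` or the divisibility of the translations.
-/

namespace HoughtonPaper

open Equiv Equiv.Perm

variable {n : ℕ} {g h : Perm (X n)} {t : Fin n → ℤ} {z : ℕ}

theorem EvTransFrom.mono (hg : EvTransFrom g t z) {z' : ℕ} (hz : z ≤ z') : EvTransFrom g t z' :=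
  fun i m hm => hg i m (hz.trans hm)

theorem natAbs_le_sum_natAbs {ι : Type*} [Fintype ι] (t : ι → ℤ) (i : ι) :
    (t i).natAbs ≤ ∑ j, (t j).natAbs :=
  Finset.single_le_sum (f := fun j => (t j).natAbs) (fun _ _ => Nat.zero_le _) (Finset.mem_univ i)

theorem EvTransFrom.inv (hg : EvTransFrom g t z) :
    EvTransFrom g⁻¹ (-t) (z + ∑ i, (t i).natAbs) := by
  intro i m hm
  have hti := natAbs_le_sum_natAbs t i
  obtain ⟨hfst, hsnd⟩ := hg i (m - t i).toNat (by omega)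
  have hpre : g (i, (m - t i).toNat) = (i, m) := Prod.ext hfst (by omega)
  rw [inv_eq_iff_eq.2 hpre.symm]
  exact ⟨rfl, by simp only [Pi.neg_apply]; omega⟩

theorem EvTransFrom.mul {tg th : Fin n → ℤ} {zg zh : ℕ} (hg : EvTransFrom g tg zg)
    (hh : EvTransFrom h th zh) :
    EvTransFrom (g * h) (tg + th) (max zh (zg + ∑ i, (th i).natAbs)) := by
  intro i m hm
  have hti := natAbs_le_sum_natAbs th i
  obtain ⟨hfst, hsnd⟩ := hh i m (le_of_max_le_left hm)
  have himage : h (i, m) = (i, (h (i, m)).2) := Prod.ext hfst rfl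
  obtain ⟨hfst', hsnd'⟩ := hg i (h (i, m)).2 (by omega)
  rw [Perm.mul_apply, himage]
  exact ⟨hfst', by simp only [Pi.add_apply]; omega⟩

theorem EvTrans.one : EvTrans (1 : Perm (X n)) 0 :=
  ⟨0, fun _ _ _ => ⟨rfl, by simp⟩⟩

theorem EvTrans.mul {tg th : Fin n → ℤ} (hg : EvTrans g tg) (hh : EvTrans h th) :
    EvTrans (g * h) (tg + th) :=
  let ⟨_, hg⟩ := hg
  let ⟨_, hh⟩ := hh
  ⟨_, hg.mul hh⟩

theorem EvTrans.inv (hg : EvTrans g t) : EvTrans g⁻¹ (-t) :=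
  let ⟨_, hg⟩ := hg
  ⟨_, hg.inv⟩

theorem EvTrans.pow (hg : EvTrans g t) (d : ℕ) : EvTrans (g ^ d) (d • t) := by
  induction d with
  | zero => simpa using EvTrans.one
  | succ d ih => simpa only [pow_succ, succ_nsmul] using ih.mul hg

theorem EvTrans.zpow (hg : EvTrans g t) (c : ℤ) : EvTrans (g ^ c) (c • t) := by
  obtain ⟨d, rfl | rfl⟩ := Int.eq_nat_or_neg c
  · simpa only [zpow_natCast, natCast_zsmul] using hg.pow d
  · simpa only [zpow_neg, zpow_natCast, neg_smul, natCast_zsmul] using (hg.pow d).inv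

theorem EvTrans.exists_evTransFrom_and_inv (hg : EvTrans g t) :
    ∃ z, EvTransFrom g t z ∧ EvTransFrom g⁻¹ (-t) z :=
  let ⟨_, hg⟩ := hg
  ⟨_, hg.mono (Nat.le_add_right _ _), hg.inv⟩

theorem EvTransFrom.pow_apply_of_pos (hg : EvTransFrom g t z) {i : Fin n} (hi : 0 < t i)
    {m : ℕ} (hm : z ≤ m) (d : ℕ) : (g ^ d) (i, m) = (i, m + d * (t i).natAbs) := by
  induction d with
  | zero => simp
  | succ d ih =>
    obtain ⟨hfst, hsnd⟩ := hg i (m + d * (t i).natAbs) (by omega)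
    rw [pow_succ', Perm.mul_apply, ih]
    exact Prod.ext hfst (by rw [add_mul, one_mul]; omega)

theorem almostEq_of_subset_union {α : Type*} {A B F : Set α} (hF : F.Finite)
    (hAB : A ⊆ B ∪ F) (hBA : B ⊆ A ∪ F) : AlmostEq A B := by
  refine hF.subset fun x hx => ?_
  rcases Set.mem_symmDiff.1 hx with ⟨hA, hB⟩ | ⟨hB, hA⟩
  · exact (hAB hA).resolve_left hB
  · exact (hBA hB).resolve_left hA

theorem Xir_neg (i : Fin n) (t : Fin n → ℤ) (r : ℕ) : Xir i (-t) r = Xir i t r := by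
  simp [Xir]

theorem EvTransFrom.fwdOrbit_eq (hg : EvTransFrom g t z) {i : Fin n} (hi : 0 < t i) {m : ℕ}
    (hm : z ≤ m) : fwdOrbit g (i, m) = Xir i t (m % (t i).natAbs) ∩ {x | m ≤ x.2} := by
  ext ⟨j, m'⟩
  constructor
  · rintro ⟨d, hd⟩
    dsimp only at hd
    rw [hg.pow_apply_of_pos hi hm d, Prod.mk.injEq] at hd
    obtain ⟨rfl, rfl⟩ := hd
    exact ⟨⟨rfl, Nat.add_mul_mod_self_right _ _ _⟩, Nat.le_add_right _ _⟩
  · rintro ⟨⟨hj, hmod⟩, hle : m ≤ m'⟩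
    dsimp only at hj hmod
    subst hj
    obtain ⟨d, hd⟩ := (Nat.modEq_iff_dvd' hle).1 hmod.symm
    refine ⟨d, ?_⟩
    dsimp only
    rw [hg.pow_apply_of_pos hi hm d, Prod.mk.injEq]
    exact ⟨rfl, by rw [mul_comm] at hd; omega⟩

theorem orbit_subset_fwdOrbit_union (g : Perm (X n)) (p : X n) (d : ℕ) :
    orbit g p ⊆
      fwdOrbit g⁻¹ p ∪ (fun k : ℕ => (g ^ k) p) '' Set.Iio d ∪ fwdOrbit g ((g ^ d) p) := by
  rintro _ ⟨k, rfl⟩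
  obtain ⟨e, rfl | rfl⟩ := Int.eq_nat_or_neg k
  · rcases lt_or_ge e d with he | he
    · exact Or.inl (Or.inr ⟨e, he, by dsimp only; rw [zpow_natCast]⟩)
    · refine Or.inr ⟨e - d, ?_⟩
      dsimp only
      rw [← Perm.mul_apply, ← pow_add, Nat.sub_add_cancel he, zpow_natCast]
  · exact Or.inl (Or.inl ⟨e, by dsimp only; rw [zpow_neg, zpow_natCast, inv_pow]⟩)

theorem fwdOrbit_pow_subset_orbit (g : Perm (X n)) (p : X n) (d : ℕ) :
    fwdOrbit g ((g ^ d) p) ⊆ orbit g p := by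
  rintro _ ⟨e, rfl⟩
  exact ⟨(e + d : ℕ), by dsimp only; rw [zpow_natCast, pow_add, Perm.mul_apply]⟩

theorem fwdOrbit_inv_subset_orbit (g : Perm (X n)) (p : X n) : fwdOrbit g⁻¹ p ⊆ orbit g p := by
  rintro _ ⟨e, rfl⟩
  exact ⟨-e, by dsimp only; rw [zpow_neg, zpow_natCast, inv_pow]⟩

theorem EvTransFrom.fwdOrbit_infinite (hg : EvTransFrom g t z) {i : Fin n} (hi : 0 < t i)
    {m : ℕ} (hm : z ≤ m) : (fwdOrbit g (i, m)).Infinite := by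
  refine Set.infinite_range_of_injective fun d d' hd => ?_
  simp only [hg.pow_apply_of_pos hi hm, Prod.mk.injEq, add_right_inj, true_and] at hd
  exact Nat.eq_of_mul_eq_mul_right (Int.natAbs_pos.2 hi.ne') hd

/-- The orbit leaves along ray `j` backwards and along ray `i` forwards, so it is almost
`X_{i,r} ∪ X_{j,s}`; everything else it visits lies in a bounded region. -/
theorem baseRel_of_pow_apply (hg : EvTransFrom g t z) (hg' : EvTransFrom g⁻¹ (-t) z)
    {i j : Fin n} (hi : 0 < t i) (hj : t j < 0) {m m' : ℕ} (hm : z ≤ m) (hm' : z ≤ m')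
    {d : ℕ} (hd : (g ^ d) (j, m') = (i, m)) : BaseRel g t i j := by
  have hj' : 0 < (-t) j := neg_pos.2 hj
  have hfwd := hg.fwdOrbit_eq hi hm
  have hbwd := hg'.fwdOrbit_eq hj' hm'
  simp only [Xir_neg, Pi.neg_apply, Int.natAbs_neg] at hbwd
  have hfwd_sub : fwdOrbit g (i, m) ⊆ orbit g (j, m') := hd ▸ fwdOrbit_pow_subset_orbit g _ d
  refine ⟨_, _, Nat.mod_lt m (by omega), Nat.mod_lt m' (by omega), orbit g (j, m'),
    ⟨⟨_, rfl⟩, (hg.fwdOrbit_infinite hi hm).mono hfwd_sub⟩, ?_⟩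
  refine almostEq_of_subset_union (F := (fun k : ℕ => (g ^ k) (j, m')) '' Set.Iio d ∪
    Set.univ ×ˢ Set.Iio (max m m')) (((Set.finite_Iio d).image _).union
      (Set.finite_univ.prod (Set.finite_Iio _))) ?_ ?_
  · intro x hx
    rcases orbit_subset_fwdOrbit_union g _ d hx with (hx | hx) | hx
    · rw [hbwd] at hx
      exact Or.inl (Or.inr hx.1)
    · exact Or.inr (Or.inl hx)
    · rw [hd, hfwd] at hx
      exact Or.inl (Or.inl hx.1)
  · rintro x (hx | hx)
    · rcases le_or_gt m x.2 with hle | hlt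
      · exact Or.inl (hfwd_sub (hfwd ▸ ⟨hx, hle⟩))
      · exact Or.inr (Or.inr ⟨trivial, lt_max_of_lt_left hlt⟩)
    · rcases le_or_gt m' x.2 with hle | hlt
      · exact Or.inl (fwdOrbit_inv_subset_orbit g _ (hbwd ▸ ⟨hx, hle⟩))
      · exact Or.inr (Or.inr ⟨trivial, lt_max_of_lt_right hlt⟩)

theorem simRel_of_pow_apply (hg : EvTransFrom g t z) (hg' : EvTransFrom g⁻¹ (-t) z)
    {i j : Fin n} (hi : t i ≠ 0) (hj : t j ≠ 0) {m m' : ℕ} (hm : z ≤ m) (hm' : z ≤ m')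
    {d : ℕ} (hd : (g ^ d) (i, m) = (j, m')) : SimRel g t i j := by
  rcases hi.lt_or_gt with hi | hi
  · rcases hj.lt_or_gt with hj | hj
    · have hback := hg'.pow_apply_of_pos (neg_pos.2 hj) hm' d
      rw [← hd, inv_pow, ← Perm.mul_apply, inv_mul_cancel, Perm.one_apply] at hback
      obtain rfl : i = j := congrArg Prod.fst hback
      exact Relation.EqvGen.refl i
    · exact Relation.EqvGen.symm _ _
        (Relation.EqvGen.rel _ _ (baseRel_of_pow_apply hg hg' hj hi hm' hm hd))
  · rw [hg.pow_apply_of_pos hi hm d] at hd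
    obtain rfl : i = j := congrArg Prod.fst hd
    exact Relation.EqvGen.refl i

theorem simRel_of_sameCycle (hg : EvTransFrom g t z) (hg' : EvTransFrom g⁻¹ (-t) z)
    {i j : Fin n} (hi : t i ≠ 0) (hj : t j ≠ 0) {m m' : ℕ} (hm : z ≤ m) (hm' : z ≤ m')
    (hc : g.SameCycle (i, m) (j, m')) : SimRel g t i j := by
  obtain ⟨k, hk⟩ := hc
  obtain ⟨d, rfl | rfl⟩ := Int.eq_nat_or_neg k
  · exact simRel_of_pow_apply hg hg' hi hj hm hm' (by rwa [zpow_natCast] at hk)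
  · rw [zpow_neg, zpow_natCast, inv_eq_iff_eq] at hk
    exact Relation.EqvGen.symm _ _ (simRel_of_pow_apply hg hg' hj hi hm' hm hk.symm)

theorem commute_ofSubtype_subtypePerm {α : Type*} {p : α → Prop} [DecidablePred p]
    (f : Perm α) (hf : ∀ x, p (f x) ↔ p x) : Commute f (ofSubtype (f.subtypePerm hf)) := by
  ext x
  by_cases hx : p x
  · simp only [Perm.mul_apply, ofSubtype_subtypePerm_of_mem hf hx,
      ofSubtype_subtypePerm_of_mem hf ((hf x).2 hx)]
  · simp only [Perm.mul_apply, ofSubtype_subtypePerm_of_not_mem hf hx,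
      ofSubtype_subtypePerm_of_not_mem hf (mt (hf x).1 hx)]

theorem EvTransFrom.ofSubtype_subtypePerm {p : X n → Prop} [DecidablePred p]
    (hg : EvTransFrom g t z) (hp : ∀ x, p (g x) ↔ p x) {t' : Fin n → ℤ}
    (ht' : ∀ i m, z ≤ m → (p (i, m) ∧ t' i = t i) ∨ (¬p (i, m) ∧ t' i = 0)) :
    EvTransFrom (ofSubtype (g.subtypePerm hp)) t' z := by
  intro i m hm
  rcases ht' i m hm with ⟨hpm, hti⟩ | ⟨hpm, hti⟩
  · rw [ofSubtype_subtypePerm_of_mem hp hpm, hti]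
    exact hg i m hm
  · rw [ofSubtype_subtypePerm_of_not_mem hp hpm, hti]
    exact ⟨rfl, by simp⟩

open Classical in
theorem exists_commute_evTrans_ite_simRel {a : Perm (X n)} {ta : Fin n → ℤ} (ha : EvTrans a ta)
    (i₀ : Fin n) :
    ∃ g, Commute a g ∧ EvTrans g (fun i => if SimRel a ta i₀ i then ta i else 0) := by
  obtain ⟨z, hz, hz'⟩ := ha.exists_evTransFrom_and_inv
  set p : X n → Prop :=
    fun x => ∃ i m, SimRel a ta i₀ i ∧ ta i ≠ 0 ∧ z ≤ m ∧ a.SameCycle (i, m) x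
  have hp : ∀ x, p (a x) ↔ p x := by simp only [p, sameCycle_apply_right, implies_true]
  refine ⟨_, commute_ofSubtype_subtypePerm a hp, z, hz.ofSubtype_subtypePerm hp ?_⟩
  intro i m hm
  by_cases h0 : ta i = 0
  · by_cases hpm : p (i, m) <;> simp [hpm, h0]
  by_cases hi : SimRel a ta i₀ i
  · exact Or.inl ⟨⟨i, m, hi, h0, hm, SameCycle.refl _ _⟩, if_pos hi⟩
  · refine Or.inr ⟨fun ⟨j, m', hj, hj0, hm', hc⟩ => hi ?_, if_neg hi⟩
    exact Relation.EqvGen.trans _ _ _ hj (simRel_of_sameCycle hz hz' hj0 h0 hm' hm hc)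

theorem exists_commute_evTrans_sum_zsmul {ι : Type*} (s : Finset ι) {a : Perm (X n)}
    {g : ι → Perm (X n)} {t : ι → Fin n → ℤ}
    (hg : ∀ l, Commute a (g l) ∧ EvTrans (g l) (t l)) (c : ι → ℤ) :
    ∃ y, Commute a y ∧ EvTrans y (∑ l ∈ s, c l • t l) := by
  classical
  induction s using Finset.induction_on with
  | empty => exact ⟨1, Commute.one_right a, by simpa using EvTrans.one⟩
  | insert l s hl ih =>
    obtain ⟨y, hya, hy⟩ := ih
    refine ⟨g l ^ c l * y, ((hg l).1.zpow_right _).mul_right hya, ?_⟩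
    rw [Finset.sum_insert hl]
    exact ((hg l).2.zpow _).mul hy

end HoughtonPaper

theorem statement13_general (n : ℕ) (a b x : Equiv.Perm (X n))
    (ta tx : Fin n → ℤ) (ha : EvTrans a ta) (hx : EvTrans x tx)
    (hconj : x⁻¹ * a * x = b)
    (hmod : ∀ i : Fin n, ta i ≠ 0 → ta i ∣ tx i)
    (k : ℕ) (reps : Fin k → Fin n)
    (hrepsI : ∀ l : Fin k, ta (reps l) ≠ 0)
    (hdistinct : ∀ l l' : Fin k, SimRel a ta (reps l) (reps l') → l = l') :
    ∃ (x' : Equiv.Perm (X n)) (tx' : Fin n → ℤ), EvTrans x' tx' ∧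
      x'⁻¹ * a * x' = b ∧
      (∀ i : Fin n, ta i ≠ 0 → ta i ∣ tx' i) ∧
      ∀ l : Fin k, tx' (reps l) = 0 := by
  choose g hg using fun l => exists_commute_evTrans_ite_simRel ha (reps l)
  obtain ⟨y, hya, hy⟩ :=
    exists_commute_evTrans_sum_zsmul Finset.univ hg fun l => -(tx (reps l) / ta (reps l))
  refine ⟨y * x, _ + tx, hy.mul hx, ?_, fun i hi => ?_, fun l₀ => ?_⟩
  · calc (y * x)⁻¹ * a * (y * x) = x⁻¹ * (y⁻¹ * a * y) * x := by group
      _ = b := by rw [hya.symm.inv_mul_cancel, hconj]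
  · simp only [Pi.add_apply, Finset.sum_apply, Pi.smul_apply, smul_eq_mul]
    refine dvd_add (Finset.dvd_sum fun l _ => ?_) (hmod i hi)
    split_ifs <;> simp
  · simp only [Pi.add_apply, Finset.sum_apply, Pi.smul_apply, smul_eq_mul]
    rw [Finset.sum_eq_single l₀ ?_ (by simp),
      if_pos (show SimRel a ta _ _ from Relation.EqvGen.refl _), neg_mul,
      Int.ediv_mul_cancel (hmod _ (hrepsI l₀)), neg_add_cancel]
    intro l _ hl
    rw [if_neg (mt (hdistinct l l₀) hl), mul_zero]

theorem statement13 (n : ℕ) (hn : 2 ≤ n) (a b x : Equiv.Perm (X n))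
    (ta tb tx : Fin n → ℤ) (ha : EvTrans a ta) (hb : EvTrans b tb) (hx : EvTrans x tx)
    (hconj : x⁻¹ * a * x = b)
    (hmod : ∀ i : Fin n, ta i ≠ 0 → ta i ∣ tx i)
    (k : ℕ) (reps : Fin k → Fin n)
    (hrepsI : ∀ l : Fin k, ta (reps l) ≠ 0)
    (hcover : ∀ i : Fin n, ta i ≠ 0 → ∃ l : Fin k, SimRel a ta i (reps l))
    (hdistinct : ∀ l l' : Fin k, SimRel a ta (reps l) (reps l') → l = l') :
    ∃ (x' : Equiv.Perm (X n)) (tx' : Fin n → ℤ), EvTrans x' tx' ∧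
      x'⁻¹ * a * x' = b ∧
      (∀ i : Fin n, ta i ≠ 0 → ta i ∣ tx' i) ∧
      ∀ l : Fin k, tx' (reps l) = 0 :=
  statement13_general n a b x ta tx ha hx hconj hmod k reps hrepsI hdistinct
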